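/- arXiv:1302.5760 — 2 statements merged into one kernel-verified Lean document; each statement's English description precedes it below -/
import Mathlib

section
/- There exist real numbers r̃*_1, …, r̃*_m with the following property. Let (γ^ε)_{ε∈(0,1)} and (r̃^ε)_{ε∈(0,1)} be families of vectors in ℝ^m such that for each k ∈ {1,…,m}, sup_{ε∈(0,1)} ε^{-1} |γ^ε_k − λ( (2/r_k) Σ_{k'=k+1}^m ((k'−k)/k) r_{k'} + 1 )| < ∞ and sup_{ε∈(0,1)} ε^{-3/2} |r̃^ε_k − r_k − ε r̃*_k| < ∞. Then there exists a finite constant C such that for all ε ∈ (0,1) and all j ∈ {1,…,m}: |ε^{1/2}(A^ε r̃^ε)_j − ε^{1/2}·(1/4)·Σ_{k=j}^m r_k (u(ε) − ε γ^ε_k v(ε))| ≤ C ε² and |ε (B r̃^ε)_j − ε·(1/4)·r_j (γ^ε_j u(ε) − v(ε))| ≤ C ε². -/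
/-!
Expanding `u(ε) = 2λ + (4/3)λ³ε + O(ε²)` and `v(ε) = 2λ² + O(ε)` (Taylor series of `sinh` and
`cosh` at `2λ√ε`), the order-`1` terms of both estimates cancel; for `B` this is the formula for
the limit of `γ^ε`. The order-`ε` terms of the `A`-estimate cancel for every `j` once `r̃*` solves
a linear system whose matrix has ones on and above the diagonal, hence is invertible. Big-`O`
along the principal filter of `(0, 1)` means a bound uniform on `(0, 1)`.
-/

open Finset

/-- `u(ε) := ε^{-1/2} sinh(2λ ε^{1/2})` for `ε > 0`, with `u(0) := 2λ`. -/
noncomputable def uFn (lam ε : ℝ) : ℝ :=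
  if ε = 0 then 2 * lam else (Real.sqrt ε)⁻¹ * Real.sinh (2 * lam * Real.sqrt ε)

/-- `v(ε) := ε^{-1}(cosh(2λ ε^{1/2}) - 1)` for `ε > 0`, with `v(0) := 2λ²`. -/
noncomputable def vFn (lam ε : ℝ) : ℝ :=
  if ε = 0 then 2 * lam ^ 2 else ε⁻¹ * (Real.cosh (2 * lam * Real.sqrt ε) - 1)

/-- The matrix `A^ε`, where the index `j : Fin m` represents `j+1 ∈ {1,…,m}`:
`A^ε_{jk} = 1_{j≤k} (λ/2 + ελ³((3k-2)/12 - (j-1)/2))`. -/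
noncomputable def Aeps (m : ℕ) (lam ε : ℝ) : Matrix (Fin m) (Fin m) ℝ :=
  fun j k => if (j : ℕ) ≤ (k : ℕ) then
    lam / 2 + ε * lam ^ 3 * ((3 * (((k : ℕ) : ℝ) + 1) - 2) / 12 - ((((j : ℕ) : ℝ) + 1) - 1) / 2)
  else 0

/-- The matrix `B`, `B_{jk} = λ² (k-j)_+ / j`. -/
noncomputable def Bmat (m : ℕ) (lam : ℝ) : Matrix (Fin m) (Fin m) ℝ :=
  fun j k => lam ^ 2 * max ((((k : ℕ) : ℝ) + 1) - (((j : ℕ) : ℝ) + 1)) 0 / (((j : ℕ) : ℝ) + 1)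

open Real Asymptotics Filter Matrix

local notation "𝓘" => 𝓟 (Set.Ioo (0:ℝ) 1)

lemma abs_exp_sub_sum_range_le (x : ℝ) (n : ℕ) :
    |exp x - ∑ i ∈ range n, x ^ i / i.factorial| ≤ |x| ^ n * exp |x| := by
  exact_mod_cast Complex.norm_exp_sub_sum_le_norm_mul_exp x n

lemma abs_sinh_sub_le (x : ℝ) : |sinh x - (x + x ^ 3 / 6)| ≤ |x| ^ 5 * exp |x| := by
  have hpos := abs_le.1 (abs_exp_sub_sum_range_le x 5)
  have hneg := abs_le.1 (abs_exp_sub_sum_range_le (-x) 5)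
  simp only [sum_range_succ, sum_range_zero, Nat.factorial, abs_neg] at hpos hneg
  rw [sinh_eq, abs_le]
  constructor <;> linarith

lemma abs_cosh_sub_le (x : ℝ) : |cosh x - (1 + x ^ 2 / 2)| ≤ |x| ^ 4 * exp |x| := by
  have hpos := abs_le.1 (abs_exp_sub_sum_range_le x 4)
  have hneg := abs_le.1 (abs_exp_sub_sum_range_le (-x) 4)
  simp only [sum_range_succ, sum_range_zero, Nat.factorial, abs_neg] at hpos hneg
  rw [cosh_eq, abs_le]
  constructor <;> linarith

lemma isBigO_rpow_of_abs_le {f : ℝ → ℝ} {p : ℝ} (C : ℝ)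
    (h : ∀ ε ∈ Set.Ioo (0:ℝ) 1, |f ε| ≤ C * ε ^ p) : f =O[𝓘] (· ^ p) :=
  isBigO_principal.2 ⟨C, fun ε hε => by
    rw [norm_eq_abs, norm_eq_abs, abs_of_pos (rpow_pos_of_pos hε.1 p)]
    exact h ε hε⟩

lemma rpow_isBigO_rpow {p q : ℝ} (h : q ≤ p) : (fun ε : ℝ => ε ^ p) =O[𝓘] (· ^ q) :=
  isBigO_rpow_of_abs_le 1 fun ε hε => by
    rw [one_mul, abs_of_pos (rpow_pos_of_pos hε.1 p)]
    exact rpow_le_rpow_of_exponent_ge hε.1 hε.2.le h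

theorem Asymptotics.IsBigO.mul_rpow {f g : ℝ → ℝ} {p q : ℝ} (hf : f =O[𝓘] (· ^ p))
    (hg : g =O[𝓘] (· ^ q)) : (fun ε => f ε * g ε) =O[𝓘] (· ^ (p + q)) :=
  (hf.mul hg).congr' EventuallyEq.rfl
    (eventually_principal.2 fun _ hε => (rpow_add hε.1 p q).symm)

lemma isBigO_const_rpow_zero (c : ℝ) : (fun _ : ℝ => c) =O[𝓘] (· ^ (0:ℝ)) := by
  simpa only [rpow_zero] using isBigO_const_one ℝ c 𝓘

lemma isBigO_id_rpow_one : (fun ε : ℝ => ε) =O[𝓘] (· ^ (1:ℝ)) := by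
  simpa only [rpow_one] using isBigO_refl (fun ε : ℝ => ε) 𝓘

lemma isBigO_affine_rpow_zero (a b : ℝ) : (fun ε => a + b * ε) =O[𝓘] (· ^ (0:ℝ)) :=
  (isBigO_const_rpow_zero a).add
    ((isBigO_id_rpow_one.const_mul_left b).trans (rpow_isBigO_rpow zero_le_one))

lemma isBigO_sqrt_rpow_half : (fun ε : ℝ => √ε) =O[𝓘] (· ^ (1 / 2 : ℝ)) := by
  simpa only [sqrt_eq_rpow] using isBigO_refl (fun ε : ℝ => √ε) 𝓘

lemma abs_mul_le_abs_of_le_one (a : ℝ) {s : ℝ} (hs0 : 0 ≤ s) (hs1 : s ≤ 1) :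
    |a * s| ≤ |a| := by
  rw [abs_mul, abs_of_nonneg hs0]
  exact mul_le_of_le_one_right (abs_nonneg a) hs1

lemma uFn_sub_isBigO (lam : ℝ) :
    (fun ε => uFn lam ε - (2 * lam + 4 / 3 * lam ^ 3 * ε)) =O[𝓘] (· ^ (2:ℝ)) := by
  refine isBigO_rpow_of_abs_le (|2 * lam| ^ 5 * exp |2 * lam|) fun ε ⟨hε0, hε1⟩ => ?_
  obtain ⟨s, hs0, rfl⟩ : ∃ s > 0, s ^ 2 = ε := ⟨√ε, sqrt_pos.2 hε0, sq_sqrt hε0.le⟩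
  have hu : uFn lam (s ^ 2) - (2 * lam + 4 / 3 * lam ^ 3 * s ^ 2)
      = s⁻¹ * (sinh (2 * lam * s) - (2 * lam * s + (2 * lam * s) ^ 3 / 6)) := by
    rw [uFn, if_neg hε0.ne', sqrt_sq hs0.le]
    field_simp
    ring
  rw [hu, abs_mul, abs_inv, abs_of_pos hs0, rpow_two]
  calc s⁻¹ * |sinh (2 * lam * s) - (2 * lam * s + (2 * lam * s) ^ 3 / 6)|
      ≤ s⁻¹ * (|2 * lam * s| ^ 5 * exp |2 * lam|) := by
        gcongr
        refine (abs_sinh_sub_le _).trans ?_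
        gcongr _ * exp ?_
        exact abs_mul_le_abs_of_le_one _ hs0.le (by nlinarith)
    _ = |2 * lam| ^ 5 * exp |2 * lam| * (s ^ 2) ^ 2 := by
      rw [abs_mul (2 * lam) s, abs_of_pos hs0]
      field_simp

lemma vFn_sub_isBigO (lam : ℝ) :
    (fun ε => vFn lam ε - 2 * lam ^ 2) =O[𝓘] (· ^ (1:ℝ)) := by
  refine isBigO_rpow_of_abs_le (|2 * lam| ^ 4 * exp |2 * lam|) fun ε ⟨hε0, hε1⟩ => ?_
  obtain ⟨s, hs0, rfl⟩ : ∃ s > 0, s ^ 2 = ε := ⟨√ε, sqrt_pos.2 hε0, sq_sqrt hε0.le⟩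
  have hv : vFn lam (s ^ 2) - 2 * lam ^ 2
      = (s ^ 2)⁻¹ * (cosh (2 * lam * s) - (1 + (2 * lam * s) ^ 2 / 2)) := by
    rw [vFn, if_neg hε0.ne', sqrt_sq hs0.le]
    field_simp
    ring
  rw [hv, abs_mul, abs_inv, abs_of_pos hε0, rpow_one]
  calc (s ^ 2)⁻¹ * |cosh (2 * lam * s) - (1 + (2 * lam * s) ^ 2 / 2)|
      ≤ (s ^ 2)⁻¹ * (|2 * lam * s| ^ 4 * exp |2 * lam|) := by
        gcongr
        refine (abs_cosh_sub_le _).trans ?_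
        gcongr _ * exp ?_
        exact abs_mul_le_abs_of_le_one _ hs0.le (by nlinarith)
    _ = |2 * lam| ^ 4 * exp |2 * lam| * s ^ 2 := by
      rw [abs_mul (2 * lam) s, abs_of_pos hs0]
      field_simp

lemma uFn_sub_two_mul_isBigO (lam : ℝ) : (fun ε => uFn lam ε - 2 * lam) =O[𝓘] (· ^ (1:ℝ)) :=
  (((uFn_sub_isBigO lam).trans (rpow_isBigO_rpow one_le_two)).add
    (isBigO_id_rpow_one.const_mul_left (4 / 3 * lam ^ 3))).congr_left fun ε => by ring

lemma uFn_isBigO_rpow_zero (lam : ℝ) : (fun ε => uFn lam ε) =O[𝓘] (· ^ (0:ℝ)) :=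
  (((uFn_sub_two_mul_isBigO lam).trans (rpow_isBigO_rpow zero_le_one)).add
    (isBigO_const_rpow_zero (2 * lam))).congr_left fun ε => by ring

lemma vFn_isBigO_rpow_zero (lam : ℝ) : (fun ε => vFn lam ε) =O[𝓘] (· ^ (0:ℝ)) :=
  (((vFn_sub_isBigO lam).trans (rpow_isBigO_rpow zero_le_one)).add
    (isBigO_const_rpow_zero (2 * lam ^ 2))).congr_left fun ε => by ring

section Expansions

variable {lam g : ℝ} {γ : ℝ → ℝ}

lemma uFn_sub_mul_vFn_expansion (hγ : (fun ε => γ ε - g) =O[𝓘] (· ^ (1:ℝ))) :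
    (fun ε => uFn lam ε - ε * γ ε * vFn lam ε
      - (2 * lam + ε * (4 / 3 * lam ^ 3 - 2 * lam ^ 2 * g))) =O[𝓘] (· ^ (2:ℝ)) := by
  have hγv : (fun ε => (γ ε - g) * vFn lam ε + g * (vFn lam ε - 2 * lam ^ 2)) =O[𝓘] (· ^ (1:ℝ)) :=
    ((hγ.mul_rpow (vFn_isBigO_rpow_zero lam)).trans (rpow_isBigO_rpow (by norm_num))).add
      ((vFn_sub_isBigO lam).const_mul_left g)
  refine ((uFn_sub_isBigO lam).sub
    ((isBigO_id_rpow_one.mul_rpow hγv).trans (rpow_isBigO_rpow (by norm_num)))).congr_left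
    fun ε => by ring

lemma mul_uFn_sub_vFn_expansion (hγ : (fun ε => γ ε - g) =O[𝓘] (· ^ (1:ℝ))) :
    (fun ε => γ ε * uFn lam ε - vFn lam ε - (2 * lam * g - 2 * lam ^ 2)) =O[𝓘] (· ^ (1:ℝ)) :=
  ((((hγ.mul_rpow (uFn_isBigO_rpow_zero lam)).trans (rpow_isBigO_rpow (by norm_num))).add
    ((uFn_sub_two_mul_isBigO lam).const_mul_left g)).sub (vFn_sub_isBigO lam)).congr_left
    fun ε => by ring

end Expansions

theorem exists_sum_Ici_eq {ι R : Type*} [Fintype ι] [LinearOrder ι]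
    [LocallyFiniteOrderTop ι] [CommRing R] (w : ι → R) :
    ∃ x : ι → R, ∀ j, ∑ k ∈ Ici j, x k = w j := by
  let M : Matrix ι ι R := fun j k => if j ≤ k then 1 else 0
  have hM : M.IsUpperTriangular := fun j k hkj => if_neg (not_le.2 hkj)
  have hdet : IsUnit M.det := by simp [det_of_isUpperTriangular hM, M]
  refine ⟨M⁻¹ *ᵥ w, fun j => ?_⟩
  have hsol : M *ᵥ (M⁻¹ *ᵥ w) = w := by rw [mulVec_mulVec, mul_nonsing_inv M hdet, one_mulVec]
  rw [← congrFun hsol j, mulVec, dotProduct, ← filter_le_eq_Ici, sum_filter]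
  simp only [M, ite_mul, one_mul, zero_mul]

section Matrices

variable {m : ℕ}

/-- The `ε → 0` limit of `γ^ε_k`. -/
noncomputable def gammaLimit (r : Fin m → ℝ) (lam : ℝ) (k : Fin m) : ℝ :=
  lam * ((2 / r k) *
    (∑ k' ∈ Ioi k, ((((k' : ℕ) : ℝ) + 1) - (((k : ℕ) : ℝ) + 1)) / (((k : ℕ) : ℝ) + 1) * r k') + 1)

/-- The weight `(3k-2)/12 - (j-1)/2` of the order-`ε` part of `A^ε_{jk}`. -/
noncomputable def aepsWeight (j k : Fin m) : ℝ :=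
  (3 * (((k : ℕ) : ℝ) + 1) - 2) / 12 - ((((j : ℕ) : ℝ) + 1) - 1) / 2

lemma Aeps_mulVec_apply (lam ε : ℝ) (v : Fin m → ℝ) (j : Fin m) :
    (Aeps m lam ε *ᵥ v) j = ∑ k ∈ Ici j, (lam / 2 + ε * lam ^ 3 * aepsWeight j k) * v k := by
  rw [mulVec, dotProduct, ← filter_le_eq_Ici, sum_filter]
  simp only [Aeps, aepsWeight, Fin.le_def, ite_mul, zero_mul]

lemma Bmat_mulVec_eq {r : Fin m → ℝ} (lam : ℝ) {j : Fin m} (hrj : r j ≠ 0) :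
    (Bmat m lam *ᵥ r) j = 1 / 4 * (r j * (2 * lam * gammaLimit r lam j - 2 * lam ^ 2)) := by
  have hsupp : ∀ k ∉ Ioi j, Bmat m lam j k * r k = 0 := fun k hk => by
    have hkj : ((k : ℕ) : ℝ) ≤ (j : ℕ) :=
      Nat.cast_le.2 (show k ≤ j from not_lt.1 (mt mem_Ioi.2 hk))
    simp only [Bmat, max_eq_right (by linarith : ((k : ℕ) : ℝ) + 1 - ((j : ℕ) + 1) ≤ 0),
      mul_zero, zero_div, zero_mul]
  rw [mulVec, dotProduct, ← sum_subset (subset_univ _) fun k _ hk => hsupp k hk, gammaLimit]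
  have hterm : ∀ k ∈ Ioi j, Bmat m lam j k * r k
      = lam ^ 2 * (((((k : ℕ) : ℝ) + 1) - (((j : ℕ) : ℝ) + 1)) / (((j : ℕ) : ℝ) + 1) * r k) :=
    fun k hk => by
      have hjk : ((j : ℕ) : ℝ) ≤ (k : ℕ) := Nat.cast_le.2 (mem_Ioi.1 hk).le
      simp only [Bmat, max_eq_left (by linarith : (0:ℝ) ≤ ((k : ℕ) : ℝ) + 1 - ((j : ℕ) + 1))]
      ring
  rw [sum_congr rfl hterm, ← mul_sum]
  field_simp
  ring

/-- The coefficient of `ε` in `A^ε_{jk} r̃^ε_k - (1/4) r_k (u(ε) - ε γ^ε_k v(ε))`. -/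
noncomputable def firstOrderCoeff (lam : ℝ) (r rstar g : Fin m → ℝ) (j k : Fin m) : ℝ :=
  lam / 2 * rstar k + lam ^ 3 * aepsWeight j k * r k
    - 1 / 4 * r k * (4 / 3 * lam ^ 3 - 2 * lam ^ 2 * g k)

lemma exists_sum_firstOrderCoeff_eq_zero (lam : ℝ) (r g : Fin m → ℝ) :
    ∃ rstar, ∀ j, ∑ k ∈ Ici j, firstOrderCoeff lam r rstar g j k = 0 := by
  obtain ⟨x, hx⟩ := exists_sum_Ici_eq fun j => ∑ k ∈ Ici j,
    r k * (2 / 3 * lam ^ 2 - lam * g k - 2 * lam ^ 2 * aepsWeight j k)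
  refine ⟨x, fun j => ?_⟩
  have hsplit : ∑ k ∈ Ici j, firstOrderCoeff lam r x g j k = lam / 2 * ∑ k ∈ Ici j, x k
      + ∑ k ∈ Ici j, (lam ^ 3 * aepsWeight j k * r k
        - 1 / 4 * r k * (4 / 3 * lam ^ 3 - 2 * lam ^ 2 * g k)) := by
    simp only [firstOrderCoeff, mul_sum, ← sum_add_distrib]
    exact sum_congr rfl fun k _ => by ring
  rw [hsplit, hx, mul_sum, ← sum_add_distrib]
  exact sum_eq_zero fun k _ => by ring

end Matrices

section MatrixExpansions

variable {lam : ℝ}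

lemma mulVec_expansion {ι : Type*} [Fintype ι] {r g : ι → ℝ} {γ rt : ℝ → ι → ℝ}
    (M : Matrix ι ι ℝ)
    (hγ : ∀ k, (fun ε => γ ε k - g k) =O[𝓘] (· ^ (1:ℝ)))
    (hrt : ∀ k, (fun ε => rt ε k - r k) =O[𝓘] (· ^ (1:ℝ))) (j : ι) :
    (fun ε => (M *ᵥ rt ε) j - 1 / 4 * (r j * (γ ε j * uFn lam ε - vFn lam ε))
      - ((M *ᵥ r) j - 1 / 4 * (r j * (2 * lam * g j - 2 * lam ^ 2)))) =O[𝓘] (· ^ (1:ℝ)) := by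
  refine ((IsBigO.fun_sum (s := univ) fun k _ => (hrt k).const_mul_left (M j k)).sub
    ((mul_uFn_sub_vFn_expansion (lam := lam) (hγ j)).const_mul_left (1 / 4 * r j))).congr_left
    fun ε => ?_
  simp only [mulVec, dotProduct, mul_sub, sum_sub_distrib]
  ring

lemma Aeps_mulVec_expansion {m : ℕ} {r rstar g : Fin m → ℝ} {γ rt : ℝ → Fin m → ℝ}
    (hγ : ∀ k, (fun ε => γ ε k - g k) =O[𝓘] (· ^ (1:ℝ)))
    (hrt : ∀ k, (fun ε => rt ε k - r k - ε * rstar k) =O[𝓘] (· ^ (3 / 2 : ℝ))) (j : Fin m) :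
    (fun ε => (Aeps m lam ε *ᵥ rt ε) j
      - 1 / 4 * ∑ k ∈ Ici j, r k * (uFn lam ε - ε * γ ε k * vFn lam ε)
      - ε * ∑ k ∈ Ici j, firstOrderCoeff lam r rstar g j k) =O[𝓘] (· ^ (3 / 2 : ℝ)) := by
  have hterm : ∀ k, (fun ε =>
      (lam / 2 + lam ^ 3 * aepsWeight j k * ε) * (rt ε k - r k - ε * rstar k)
      + ε * (lam ^ 3 * aepsWeight j k * rstar k * ε)
      - 1 / 4 * r k * (uFn lam ε - ε * γ ε k * vFn lam ε
        - (2 * lam + ε * (4 / 3 * lam ^ 3 - 2 * lam ^ 2 * g k)))) =O[𝓘] (· ^ (3 / 2 : ℝ)) :=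
    fun k =>
      have hδ := ((isBigO_affine_rpow_zero _ _).mul_rpow (hrt k)).trans
        (rpow_isBigO_rpow (by norm_num))
      have hsq := (isBigO_id_rpow_one.mul_rpow (isBigO_id_rpow_one.const_mul_left _)).trans
        (rpow_isBigO_rpow (by norm_num))
      have huv := ((uFn_sub_mul_vFn_expansion (hγ k)).const_mul_left _).trans
        (rpow_isBigO_rpow (by norm_num))
      (hδ.add hsq).sub huv
  refine (IsBigO.fun_sum (s := Ici j) fun k _ => hterm k).congr_left fun ε => ?_
  simp only [Aeps_mulVec_apply, firstOrderCoeff, mul_sum, ← sum_sub_distrib]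
  exact sum_congr rfl fun k _ => by ring

end MatrixExpansions

lemma exists_forall_abs_le_of_isBigO {ι : Type*} [Fintype ι] {f g : ι → ℝ → ℝ}
    (hf : ∀ i, f i =O[𝓘] (· ^ (2:ℝ))) (hg : ∀ i, g i =O[𝓘] (· ^ (2:ℝ))) :
    ∃ C, ∀ ε ∈ Set.Ioo (0:ℝ) 1, ∀ i, |f i ε| ≤ C * ε ^ 2 ∧ |g i ε| ≤ C * ε ^ 2 := by
  obtain ⟨C, hC⟩ := isBigO_principal.1 <|
    (isBigO_pi.2 fun i => hf i).prod_left (isBigO_pi.2 fun i => hg i)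
  refine ⟨C, fun ε hε i => ?_⟩
  have hbound := hC ε hε
  rw [norm_eq_abs (ε ^ (2:ℝ)), rpow_two, abs_of_pos (pow_pos hε.1 2)] at hbound
  exact ⟨(norm_le_pi_norm (fun i => f i ε) i).trans ((norm_fst_le _).trans hbound),
    (norm_le_pi_norm (fun i => g i ε) i).trans ((norm_snd_le _).trans hbound)⟩

theorem stmt0_general (m : ℕ) (r : Fin m → ℝ) (hr : ∀ k, 0 < r k) (lam : ℝ) :
    ∃ rstar : Fin m → ℝ,
      ∀ γ rt : ℝ → Fin m → ℝ,
        -- γ^ε_k = λ((2/r_k) Σ_{k'>k} ((k'-k)/k) r_{k'} + 1) + O(ε)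
        (∀ k : Fin m, ∃ Ck : ℝ, ∀ ε ∈ Set.Ioo (0:ℝ) 1,
          |γ ε k - lam * ((2 / r k) *
              (∑ k' ∈ Finset.Ioi k,
                ((((k' : ℕ) : ℝ) + 1) - (((k : ℕ) : ℝ) + 1)) / (((k : ℕ) : ℝ) + 1) * r k') + 1)|
            ≤ Ck * ε) →
        -- r̃^ε_k = r_k + ε r̃*_k + O(ε^{3/2})
        (∀ k : Fin m, ∃ Ck : ℝ, ∀ ε ∈ Set.Ioo (0:ℝ) 1,
          |rt ε k - r k - ε * rstar k| ≤ Ck * ε ^ ((3:ℝ)/2)) →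
        ∃ C : ℝ, ∀ ε ∈ Set.Ioo (0:ℝ) 1, ∀ j : Fin m,
          |Real.sqrt ε * (Aeps m lam ε).mulVec (rt ε) j
              - Real.sqrt ε * (1/4) *
                ∑ k ∈ Finset.Ici j, r k * (uFn lam ε - ε * γ ε k * vFn lam ε)|
            ≤ C * ε ^ 2 ∧
          |ε * (Bmat m lam).mulVec (rt ε) j
              - ε * (1/4) * (r j * (γ ε j * uFn lam ε - vFn lam ε))|
            ≤ C * ε ^ 2 := by
  obtain ⟨rstar, hrstar⟩ := exists_sum_firstOrderCoeff_eq_zero lam r (gammaLimit r lam)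
  refine ⟨rstar, fun γ rt hγ hrt => ?_⟩
  have hγ_lim : ∀ k, (fun ε => γ ε k - gammaLimit r lam k) =O[𝓘] (· ^ (1:ℝ)) := fun k => by
    obtain ⟨C, hC⟩ := hγ k
    exact isBigO_rpow_of_abs_le C fun ε hε => by rw [rpow_one]; exact hC ε hε
  have hrt_exp : ∀ k, (fun ε => rt ε k - r k - ε * rstar k) =O[𝓘] (· ^ (3 / 2 : ℝ)) := fun k => by
    obtain ⟨C, hC⟩ := hrt k
    exact isBigO_rpow_of_abs_le C hC
  have hrt_lim : ∀ k, (fun ε => rt ε k - r k) =O[𝓘] (· ^ (1:ℝ)) := fun k =>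
    (((hrt_exp k).trans (rpow_isBigO_rpow (by norm_num))).add
      (isBigO_id_rpow_one.const_mul_left (rstar k))).congr_left fun ε => by ring
  refine exists_forall_abs_le_of_isBigO (fun j => ?_) (fun j => ?_)
  · have h := isBigO_sqrt_rpow_half.mul_rpow (Aeps_mulVec_expansion (lam := lam) hγ_lim hrt_exp j)
    simp only [hrstar j, mul_zero, sub_zero] at h
    exact (h.trans (rpow_isBigO_rpow (by norm_num))).congr_left fun ε => by ring
  · have h := isBigO_id_rpow_one.mul_rpow
      (mulVec_expansion (lam := lam) (Bmat m lam) hγ_lim hrt_lim j)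
    simp only [Bmat_mulVec_eq lam (hr j).ne', sub_self, sub_zero] at h
    exact (h.trans (rpow_isBigO_rpow (by norm_num))).congr_left fun ε => by ring

theorem stmt0 (m : ℕ) (hm : 1 ≤ m) (r : Fin m → ℝ) (hr : ∀ k, 0 < r k)
    (hrsum : ∑ k, r k = 1) (lam : ℝ) (hlam : 0 < lam) :
    ∃ rstar : Fin m → ℝ,
      ∀ γ rt : ℝ → Fin m → ℝ,
        -- γ^ε_k = λ((2/r_k) Σ_{k'>k} ((k'-k)/k) r_{k'} + 1) + O(ε)
        (∀ k : Fin m, ∃ Ck : ℝ, ∀ ε ∈ Set.Ioo (0:ℝ) 1,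
          |γ ε k - lam * ((2 / r k) *
              (∑ k' ∈ Finset.Ioi k,
                ((((k' : ℕ) : ℝ) + 1) - (((k : ℕ) : ℝ) + 1)) / (((k : ℕ) : ℝ) + 1) * r k') + 1)|
            ≤ Ck * ε) →
        -- r̃^ε_k = r_k + ε r̃*_k + O(ε^{3/2})
        (∀ k : Fin m, ∃ Ck : ℝ, ∀ ε ∈ Set.Ioo (0:ℝ) 1,
          |rt ε k - r k - ε * rstar k| ≤ Ck * ε ^ ((3:ℝ)/2)) →
        ∃ C : ℝ, ∀ ε ∈ Set.Ioo (0:ℝ) 1, ∀ j : Fin m,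
          |Real.sqrt ε * (Aeps m lam ε).mulVec (rt ε) j
              - Real.sqrt ε * (1/4) *
                ∑ k ∈ Finset.Ici j, r k * (uFn lam ε - ε * γ ε k * vFn lam ε)|
            ≤ C * ε ^ 2 ∧
          |ε * (Bmat m lam).mulVec (rt ε) j
              - ε * (1/4) * (r j * (γ ε j * uFn lam ε - vFn lam ε))|
            ≤ C * ε ^ 2 :=
  stmt0_general m r hr lam
end

section
/- There exists ε₀ > 0 such that for every ε ∈ [0, ε₀) there is a unique pair of vectors (γ, r̃) ∈ ℝ^m × ℝ^m satisfying the exact matching system: A^ε r̃ = (1/4)( u(ε) A r − ε v(ε) A R γ ) and B r̃ = (1/4)( u(ε) R γ − v(ε) r ), where A is the m×m matrix with A_{jk} := 1_{{j≤k}}, R is the diagonal matrix with entries R_{kk} := r_k, and r := (r_1,…,r_m). Moreover, for such ε the matrix A^ε is invertible and the matrix R + ε (v(ε)/u(ε)) B (A^ε)^{-1} A R is invertible. -/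
open Finset

/-- The matrix `A`, `A_{jk} = 1_{j≤k}`. -/
def Amat (m : ℕ) : Matrix (Fin m) (Fin m) ℝ :=
  fun j k => if (j : ℕ) ≤ (k : ℕ) then 1 else 0

/-!
At `ε = 0` the matrix `A^ε` is upper triangular with diagonal `λ/2`, and
`R + ε (v/u) B (A^ε)⁻¹ A R` reduces to `R = diag r`; both are invertible. Since
`ε v(ε)/u(ε) = √ε tanh(λ√ε)`, both matrices depend continuously on `ε`, so they stay invertible
for small `ε`. Then the first equation determines `r̃` from `γ`, and substituting it into the
second leaves a linear system for `γ` whose matrix, a Schur complement, is `u/4` times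
`R + ε (v/u) B (A^ε)⁻¹ A R`.
-/

open Filter Topology Matrix

namespace Matrix

variable {n 𝕜 : Type*} [Fintype n] [DecidableEq n] [Field 𝕜]

theorem mulVec_eq_iff_eq_inv_mulVec {M : Matrix n n 𝕜} (hM : IsUnit M) {x y : n → 𝕜} :
    M *ᵥ x = y ↔ x = M⁻¹ *ᵥ y := by
  have hdet := (isUnit_iff_isUnit_det M).mp hM
  constructor
  · rintro rfl
    rw [mulVec_mulVec, nonsing_inv_mul _ hdet, one_mulVec]
  · rintro rfl
    rw [mulVec_mulVec, mul_nonsing_inv _ hdet, one_mulVec]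

/-- Eliminating `x` from the first equation leaves the Schur complement system
`(L + B M⁻¹ K) γ = B M⁻¹ b + c`. -/
theorem existsUnique_of_isUnit_schurComplement {M K B L : Matrix n n 𝕜} {b c : n → 𝕜}
    (hM : IsUnit M) (hS : IsUnit (L + B * M⁻¹ * K)) :
    ∃! p : (n → 𝕜) × (n → 𝕜), M *ᵥ p.2 = b - K *ᵥ p.1 ∧ B *ᵥ p.2 = L *ᵥ p.1 - c := by
  set S := L + B * M⁻¹ * K
  have hsystem : ∀ γ x, (M *ᵥ x = b - K *ᵥ γ ∧ B *ᵥ x = L *ᵥ γ - c) ↔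
      (x = M⁻¹ *ᵥ (b - K *ᵥ γ) ∧ S *ᵥ γ = B *ᵥ M⁻¹ *ᵥ b + c) := by
    intro γ x
    rw [mulVec_eq_iff_eq_inv_mulVec hM]
    refine and_congr_right fun hx => ?_
    rw [hx, mulVec_sub, mulVec_sub, add_mulVec, sub_eq_sub_iff_add_eq_add, eq_comm]
    simp only [mulVec_mulVec, Matrix.mul_assoc]
  obtain ⟨γ₀, hγ₀⟩ := mulVec_surjective_iff_isUnit.mpr hS (B *ᵥ M⁻¹ *ᵥ b + c)
  refine ⟨(γ₀, M⁻¹ *ᵥ (b - K *ᵥ γ₀)), (hsystem _ _).mpr ⟨rfl, hγ₀⟩, fun ⟨γ, x⟩ h => ?_⟩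
  obtain ⟨rfl, hγ⟩ := (hsystem γ x).mp h
  rw [mulVec_injective_iff_isUnit.mpr hS (hγ.trans hγ₀.symm)]

end Matrix

theorem ContinuousAt.eventually_isUnit_matrix {n 𝕜 : Type*} [Fintype n] [DecidableEq n] [Field 𝕜]
    [TopologicalSpace 𝕜] [IsTopologicalRing 𝕜]
    [T1Space 𝕜] {X : Type*} [TopologicalSpace X] {f : X → Matrix n n 𝕜} {x : X}
    (hf : ContinuousAt f x) (hx : IsUnit (f x)) : ∀ᶠ y in 𝓝 x, IsUnit (f y) := by
  simp only [isUnit_iff_isUnit_det, isUnit_iff_ne_zero] at hx ⊢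
  exact (continuous_id.matrix_det.continuousAt.comp hf).eventually_ne hx

theorem existsUnique_matching_system {n 𝕜 : Type*} [Fintype n] [DecidableEq n] [Field 𝕜]
    [CharZero 𝕜]
    {M A B : Matrix n n 𝕜} {r : n → 𝕜} {u v ε : 𝕜} (hu : u ≠ 0) (hM : IsUnit M)
    (hN : IsUnit (diagonal r + (ε * (v / u)) • (B * M⁻¹ * A * diagonal r))) :
    ∃! p : (n → 𝕜) × (n → 𝕜),
      M *ᵥ p.2 = (1/4 : 𝕜) • (u • A *ᵥ r - (ε * v) • A *ᵥ (fun k => r k * p.1 k)) ∧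
      B *ᵥ p.2 = (1/4 : 𝕜) • (u • (fun j => r j * p.1 j) - v • r) := by
  have hR : ∀ γ : n → 𝕜, (fun k => r k * γ k) = diagonal r *ᵥ γ :=
    fun γ => funext fun k => (mulVec_diagonal r γ k).symm
  have hschur : (1/4 * u) • diagonal r + B * M⁻¹ * ((1/4 * (ε * v)) • (A * diagonal r)) =
      Units.mk0 (1/4 * u) (mul_ne_zero (by norm_num) hu) •
        (diagonal r + (ε * (v / u)) • (B * M⁻¹ * A * diagonal r)) := by
    rw [Units.smul_mk0, smul_add, smul_smul, Matrix.mul_smul, Matrix.mul_assoc _ A]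
    congr 2
    field_simp
  refine (existsUnique_congr fun p => ?_).mpr <|
    existsUnique_of_isUnit_schurComplement (b := (1/4 * u) • A *ᵥ r) (c := (1/4 * v) • r) hM
      (hschur ▸ hN.smul _)
  rw [hR, smul_mulVec, smul_mulVec, ← mulVec_mulVec, smul_sub, smul_sub, smul_smul, smul_smul,
    smul_smul, smul_smul]

theorem uFn_ne_zero {lam ε : ℝ} (hlam : lam ≠ 0) (hε : 0 ≤ ε) : uFn lam ε ≠ 0 := by
  rcases hε.eq_or_lt with rfl | hε
  · simpa [uFn] using hlam
  · have hs : √ε ≠ 0 := (Real.sqrt_pos.mpr hε).ne'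
    rw [uFn, if_neg hε.ne']
    exact mul_ne_zero (inv_ne_zero hs) (Real.sinh_ne_zero.mpr (by simp [hlam, hs]))

/-- By the double-angle formulas, `cosh 2x - 1 = 2 sinh² x` and `sinh 2x = 2 sinh x cosh x`. -/
theorem mul_vFn_div_uFn {lam : ℝ} (hlam : lam ≠ 0) (ε : ℝ) :
    ε * (vFn lam ε / uFn lam ε) = √ε * Real.tanh (lam * √ε) := by
  rcases lt_trichotomy ε 0 with hε | rfl | hε
  · simp [uFn, vFn, hε.ne, Real.sqrt_eq_zero'.mpr hε.le]
  · simp [uFn, vFn]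
  · have hs : √ε ≠ 0 := (Real.sqrt_pos.mpr hε).ne'
    have hsinh : Real.sinh (lam * √ε) ≠ 0 := Real.sinh_ne_zero.mpr (mul_ne_zero hlam hs)
    have hcosh : Real.cosh (lam * √ε) ≠ 0 := (Real.cosh_pos _).ne'
    rw [uFn, vFn, if_neg hε.ne', if_neg hε.ne', mul_assoc, Real.cosh_two_mul, Real.sinh_two_mul,
      Real.cosh_sq, Real.tanh_eq_sinh_div_cosh, ← Real.sq_sqrt hε.le]
    field_simp
    ring

theorem continuous_mul_vFn_div_uFn {lam : ℝ} (hlam : lam ≠ 0) :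
    Continuous fun ε => ε * (vFn lam ε / uFn lam ε) := by
  simp_rw [mul_vFn_div_uFn hlam, Real.tanh_eq_sinh_div_cosh]
  exact Real.continuous_sqrt.mul <|
    (by fun_prop : Continuous fun ε => Real.sinh (lam * √ε)).div (by fun_prop)
      fun _ => (Real.cosh_pos _).ne'

theorem continuous_Aeps (m : ℕ) (lam : ℝ) : Continuous (Aeps m lam) := by
  refine continuous_matrix fun j k => ?_
  unfold Aeps
  split_ifs <;> fun_prop

theorem det_Aeps_zero (m : ℕ) (lam : ℝ) : (Aeps m lam 0).det = (lam / 2) ^ m := by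
  rw [det_of_isUpperTriangular]
  · simp [Aeps, div_pow]
  · intro i j (hij : j < i)
    simp [Aeps, not_le.mpr hij]

theorem stmt1_general (m : ℕ) (r : Fin m → ℝ) (hr : ∀ k, 0 < r k)
    (lam : ℝ) (hlam : 0 < lam) :
    ∃ ε₀ : ℝ, 0 < ε₀ ∧ ∀ ε : ℝ, 0 ≤ ε → ε < ε₀ →
      (∃! p : (Fin m → ℝ) × (Fin m → ℝ),
        -- A^ε r̃ = (1/4)(u(ε) A r − ε v(ε) A R γ)
        (Aeps m lam ε).mulVec p.2 =
          (1/4 : ℝ) • (uFn lam ε • (Amat m).mulVec r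
            - (ε * vFn lam ε) • (Amat m).mulVec (fun k => r k * p.1 k)) ∧
        -- B r̃ = (1/4)(u(ε) R γ − v(ε) r)
        (Bmat m lam).mulVec p.2 =
          (1/4 : ℝ) • (uFn lam ε • (fun j => r j * p.1 j) - vFn lam ε • r)) ∧
      IsUnit (Aeps m lam ε) ∧
      IsUnit (Matrix.diagonal r +
        (ε * (vFn lam ε / uFn lam ε)) •
          (Bmat m lam * (Aeps m lam ε)⁻¹ * Amat m * Matrix.diagonal r)) := by
  set N : ℝ → Matrix (Fin m) (Fin m) ℝ := fun ε => diagonal r +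
    (ε * (vFn lam ε / uFn lam ε)) • (Bmat m lam * (Aeps m lam ε)⁻¹ * Amat m * diagonal r)
  have hA0 : IsUnit (Aeps m lam 0) := by
    rw [isUnit_iff_isUnit_det, det_Aeps_zero, isUnit_iff_ne_zero]
    positivity
  have hN0 : IsUnit (N 0) := by
    simpa [N, isUnit_diagonal, Pi.isUnit_iff] using fun k => (hr k).ne'
  have hAinv : ContinuousAt (fun ε => (Aeps m lam ε)⁻¹) 0 := by
    refine (continuousAt_matrix_inv _ ?_).comp (continuous_Aeps m lam).continuousAt
    simpa [Ring.inverse_eq_inv'] using continuousAt_inv₀ ((isUnit_iff_isUnit_det _).mp hA0).ne_zero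
  have hN : ContinuousAt N 0 :=
    continuousAt_const.add <| (continuous_mul_vFn_div_uFn hlam.ne').continuousAt.smul <|
      ((continuousAt_const.mul hAinv).mul continuousAt_const).mul continuousAt_const
  obtain ⟨ε₀, hε₀, hunits⟩ := Metric.eventually_nhds_iff.mp <|
    ((continuous_Aeps m lam).continuousAt.eventually_isUnit_matrix hA0).and
      (hN.eventually_isUnit_matrix hN0)
  refine ⟨ε₀, hε₀, fun ε hε hεε₀ => ?_⟩
  obtain ⟨hAε, hNε⟩ := hunits (by rwa [Real.dist_eq, sub_zero, abs_of_nonneg hε])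
  exact ⟨existsUnique_matching_system (uFn_ne_zero hlam.ne' hε) hAε hNε, hAε, hNε⟩

theorem stmt1 (m : ℕ) (hm : 1 ≤ m) (r : Fin m → ℝ) (hr : ∀ k, 0 < r k)
    (hrsum : ∑ k, r k = 1) (lam : ℝ) (hlam : 0 < lam) :
    ∃ ε₀ : ℝ, 0 < ε₀ ∧ ∀ ε : ℝ, 0 ≤ ε → ε < ε₀ →
      (∃! p : (Fin m → ℝ) × (Fin m → ℝ),
        -- A^ε r̃ = (1/4)(u(ε) A r − ε v(ε) A R γ)
        (Aeps m lam ε).mulVec p.2 =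
          (1/4 : ℝ) • (uFn lam ε • (Amat m).mulVec r
            - (ε * vFn lam ε) • (Amat m).mulVec (fun k => r k * p.1 k)) ∧
        -- B r̃ = (1/4)(u(ε) R γ − v(ε) r)
        (Bmat m lam).mulVec p.2 =
          (1/4 : ℝ) • (uFn lam ε • (fun j => r j * p.1 j) - vFn lam ε • r)) ∧
      IsUnit (Aeps m lam ε) ∧
      IsUnit (Matrix.diagonal r +
        (ε * (vFn lam ε / uFn lam ε)) •
          (Bmat m lam * (Aeps m lam ε)⁻¹ * Amat m * Matrix.diagonal r)) :=
  stmt1_general m r hr lam hlam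
end
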